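/- arXiv:1602.01753 — 7 statements merged into one kernel-verified Lean document; each statement's English description precedes it below -/
import Mathlib

section
/- Let X be a complete lattice and let F be a nonempty family of monotone maps from X to itself that is commutative (f ∘ g = g ∘ f for all f, g ∈ F). Then the set fix F of common fixed points of F is nonempty, and moreover every subset S of fix F has a least upper bound within fix F with respect to the induced order (i.e., there exists u ∈ fix F such that u is an upper bound of S among elements of fix F and u ≤ v for every v ∈ fix F that is an upper bound of S). -/
/-- For a complete lattice `X` and a nonempty commutative family `F` of
monotone self-maps, the set of common fixed points is nonempty and every subset of it
has a least upper bound within it (w.r.t. the induced order). -/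
theorem stmt_0 {X : Type*} [CompleteLattice X] (F : Set (X → X)) (hF : F.Nonempty)
    (hmono : ∀ f ∈ F, Monotone f)
    (hcomm : ∀ f ∈ F, ∀ g ∈ F, f ∘ g = g ∘ f) :
    ({x : X | ∀ f ∈ F, f x = x}).Nonempty ∧
      ∀ S ⊆ {x : X | ∀ f ∈ F, f x = x},
        ∃ u ∈ {x : X | ∀ f ∈ F, f x = x},
          (∀ s ∈ S, s ≤ u) ∧
          ∀ v ∈ {x : X | ∀ f ∈ F, f x = x}, (∀ s ∈ S, s ≤ v) → u ≤ v := by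
  -- key construction: for any a with a ≤ f x whenever a ≤ x, the least
  -- prefixed point above a is a common fixed point.
  have key : ∀ S ⊆ {x : X | ∀ f ∈ F, f x = x},
      ∃ u ∈ {x : X | ∀ f ∈ F, f x = x},
        (∀ s ∈ S, s ≤ u) ∧
        ∀ v ∈ {x : X | ∀ f ∈ F, f x = x}, (∀ s ∈ S, s ≤ v) → u ≤ v := by
    intro S hS
    set a : X := sSup S with ha
    -- a ≤ f x whenever a ≤ x
    have haf : ∀ f ∈ F, ∀ x, a ≤ x → a ≤ f x := by
      intro f hf x hax
      apply sSup_le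
      intro s hs
      have : f s ≤ f x := hmono f hf (le_trans (le_sSup hs) hax)
      rwa [hS hs f hf] at this
    set Q : Set X := {x | a ≤ x ∧ ∀ f ∈ F, f x ≤ x} with hQ
    have hQtop : (⊤ : X) ∈ Q := ⟨le_top, fun f _ => le_top⟩
    set u : X := sInf Q with hu
    have hau : a ≤ u := le_sInf fun x hx => hx.1
    have hfu : ∀ f ∈ F, f u ≤ u := by
      intro f hf
      apply le_sInf
      intro x hx
      exact le_trans (hmono f hf (sInf_le hx)) (hx.2 f hf)
    have hufix : ∀ f ∈ F, f u = u := by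
      intro f hf
      refine le_antisymm (hfu f hf) ?_
      have hfuQ : f u ∈ Q := by
        constructor
        · exact haf f hf u hau
        · intro g hg
          have : g (f u) = f (g u) := by
            have := congrFun (hcomm g hg f hf) u
            simpa using this
          rw [this]
          exact hmono f hf (hfu g hg)
      exact sInf_le hfuQ
    refine ⟨u, hufix, fun s hs => le_trans (le_sSup hs) hau, ?_⟩
    intro v hv hvub
    exact sInf_le ⟨sSup_le hvub, fun f hf => le_of_eq (hv f hf)⟩
  refine ⟨?_, key⟩
  obtain ⟨u, hu, -, -⟩ := key ∅ (by simp)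
  exact ⟨u, hu⟩
end

section
/- Let (X, ≤) be a chain-complete partially ordered set and let F be a nonempty commutative family of monotone maps from X to itself. Then the set fix F of common fixed points of F, equipped with the induced order, is chain-complete: every subset C of fix F that is totally ordered by ≤ (including the empty set) has a least upper bound within fix F. In particular fix F is nonempty and has a least element. -/
/-- Abian–Brown: least fixed point of a monotone map above a post-fixed point,
on a chain-complete poset. -/
theorem abian_brown {X : Type*} [PartialOrder X]
    (hcc : ∀ C : Set X, IsChain (· ≤ ·) C → ∃ s, IsLUB C s)
    (f : X → X) (hf : Monotone f) (a : X) (ha : a ≤ f a) :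
    ∃ m, f m = m ∧ a ≤ m ∧ ∀ z, f z = z → a ≤ z → m ≤ z := by
  set S : Set X := {x | a ≤ x ∧ x ≤ f x ∧ ∀ z, f z = z → a ≤ z → x ≤ z} with hS
  have haS : a ∈ S := ⟨le_refl a, ha, fun z _ hz => hz⟩
  obtain ⟨m, hm⟩ := zorn_le₀ S (by
    intro c hcS hchain
    rcases c.eq_empty_or_nonempty with rfl | ⟨x, hx⟩
    · exact ⟨a, haS, by simp⟩
    · obtain ⟨s, hs⟩ := hcc c hchain
      refine ⟨s, ⟨?_, ?_, ?_⟩, fun z hz => hs.1 hz⟩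
      · exact le_trans (hcS hx).1 (hs.1 hx)
      · exact hs.2 fun y hy => le_trans (hcS hy).2.1 (hf (hs.1 hy))
      · intro z hz haz
        exact hs.2 fun y hy => (hcS hy).2.2 z hz haz)
  obtain ⟨ham, hmf, hmle⟩ := hm.1
  have hfmS : f m ∈ S := by
    refine ⟨le_trans ham hmf, hf hmf, fun z hz haz => ?_⟩
    calc f m ≤ f z := hf (hmle z hz haz)
    _ = z := hz
  have : f m = m := le_antisymm (hm.2 hfmS hmf) hmf
  exact ⟨m, this, ham, hmle⟩

/-- Least common fixed point of a commutative family of monotone maps above a common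
post-fixed point. -/
theorem common_fix {X : Type*} [PartialOrder X]
    (hcc : ∀ C : Set X, IsChain (· ≤ ·) C → ∃ s, IsLUB C s)
    (F : Set (X → X)) (hmono : ∀ f ∈ F, Monotone f)
    (hcomm : ∀ f ∈ F, ∀ g ∈ F, f ∘ g = g ∘ f)
    (a : X) (ha : ∀ f ∈ F, a ≤ f a) :
    ∃ m, (∀ f ∈ F, f m = m) ∧ a ≤ m ∧
      ∀ z, (∀ f ∈ F, f z = z) → a ≤ z → m ≤ z := by
  set S : Set X := {x | a ≤ x ∧ (∀ f ∈ F, x ≤ f x) ∧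
      ∀ z, (∀ f ∈ F, f z = z) → a ≤ z → x ≤ z} with hS
  have haS : a ∈ S := ⟨le_refl a, ha, fun z _ hz => hz⟩
  obtain ⟨m, hm⟩ := zorn_le₀ S (by
    intro c hcS hchain
    rcases c.eq_empty_or_nonempty with rfl | ⟨x, hx⟩
    · exact ⟨a, haS, by simp⟩
    · obtain ⟨s, hs⟩ := hcc c hchain
      refine ⟨s, ⟨?_, ?_, ?_⟩, fun z hz => hs.1 hz⟩
      · exact le_trans (hcS hx).1 (hs.1 hx)
      · intro f hf
        exact hs.2 fun y hy => le_trans ((hcS hy).2.1 f hf) (hmono f hf (hs.1 hy))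
      · intro z hz haz
        exact hs.2 fun y hy => (hcS hy).2.2 z hz haz)
  obtain ⟨ham, hmf, hmle⟩ := hm.1
  refine ⟨m, fun f hf => ?_, ham, hmle⟩
  obtain ⟨μ, hμfix, hmμ, hμle⟩ := abian_brown hcc f (hmono f hf) m (hmf f hf)
  have hμS : μ ∈ S := by
    refine ⟨le_trans ham hmμ, fun g hg => ?_, fun z hz haz => ?_⟩
    · -- g μ is an f-fixed point above m
      have hfix : f (g μ) = g μ := by
        have := congrFun (hcomm f hf g hg) μ
        simpa [hμfix] using this
      exact hμle (g μ) hfix (le_trans (hmf g hg) ((hmono g hg) hmμ))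
    · exact hμle z (hz f hf) (hmle z hz haz)
  have : μ = m := le_antisymm (hm.2 hμS hmμ) hmμ
  exact this ▸ hμfix

/-- For a chain-complete poset `X` and a nonempty commutative family `F`
of monotone self-maps, the set of common fixed points is chain-complete in the induced
order; in particular it is nonempty and has a least element. -/
theorem stmt_1 {X : Type*} [PartialOrder X]
    (hcc : ∀ C : Set X, IsChain (· ≤ ·) C → ∃ s, IsLUB C s)
    (F : Set (X → X)) (hF : F.Nonempty)
    (hmono : ∀ f ∈ F, Monotone f)
    (hcomm : ∀ f ∈ F, ∀ g ∈ F, f ∘ g = g ∘ f) :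
    (∀ C ⊆ {x : X | ∀ f ∈ F, f x = x}, IsChain (· ≤ ·) C →
      ∃ u ∈ {x : X | ∀ f ∈ F, f x = x},
        (∀ c ∈ C, c ≤ u) ∧
        ∀ v ∈ {x : X | ∀ f ∈ F, f x = x}, (∀ c ∈ C, c ≤ v) → u ≤ v) ∧
    ({x : X | ∀ f ∈ F, f x = x}).Nonempty ∧
    (∃ b ∈ {x : X | ∀ f ∈ F, f x = x},
      ∀ x ∈ {x : X | ∀ f ∈ F, f x = x}, b ≤ x) := by
  have main : ∀ C ⊆ {x : X | ∀ f ∈ F, f x = x}, IsChain (· ≤ ·) C →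
      ∃ u ∈ {x : X | ∀ f ∈ F, f x = x},
        (∀ c ∈ C, c ≤ u) ∧
        ∀ v ∈ {x : X | ∀ f ∈ F, f x = x}, (∀ c ∈ C, c ≤ v) → u ≤ v := by
    intro C hC hchain
    obtain ⟨a, hs⟩ := hcc C hchain
    have ha : ∀ f ∈ F, a ≤ f a := by
      intro f hf
      exact hs.2 fun c hc => (hC hc f hf) ▸ hmono f hf (hs.1 hc)
    obtain ⟨m, hmfix, ham, hmle⟩ := common_fix hcc F hmono hcomm a ha
    exact ⟨m, hmfix, fun c hc => le_trans (hs.1 hc) ham,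
      fun v hv hub => hmle v hv (hs.2 hub)⟩
  obtain ⟨u, hu, -, hul⟩ := main ∅ (by simp) (by simp [IsChain, Set.Pairwise])
  exact ⟨main, ⟨u, hu⟩, ⟨u, hu, fun x hx => hul x hx (by simp)⟩⟩
end

section
/- Let (X, ≤) be a chain-complete partially ordered set and let F be a nonempty commutative family of chain-continuous maps from X to itself. Then a point u ∈ X is a common fixed point of F if and only if there exists x ∈ X with x ≤ f x for every f ∈ F such that u is a least upper bound of the orbit set {φ x : φ ∈ iter F}. -/
/-!
Every map in `F` is monotone, and commutativity makes `f y` a common post-fixed point whenever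
`y` is one. Zorn's lemma, applied to the common post-fixed points whose whole orbit stays below
`u` (a family closed under sups of nonempty chains by chain-continuity), yields a maximal such
point `m ≥ x`; maximality forces `f m = m` for all `f ∈ F`. Then `m` bounds the orbit of `x`,
so `u ≤ m ≤ u`. The converse is immediate: a common fixed point is the whole orbit of itself.
-/

/-- The composition closure of a family `F` of self-maps: all finite compositions
`f₁ ∘ ⋯ ∘ fₙ` with `n ≥ 1` and each `fᵢ ∈ F`. -/
inductive IterClosure {X : Type*} (F : Set (X → X)) : (X → X) → Prop
  | base {f : X → X} : f ∈ F → IterClosure F f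
  | comp {f φ : X → X} : f ∈ F → IterClosure F φ → IterClosure F (f ∘ φ)

section ChainContinuous

variable {α β γ : Type*} [Preorder α] [Preorder β] [Preorder γ]

def ChainContinuous (f : α → β) : Prop :=
  ∀ C : Set α, C.Nonempty → IsChain (· ≤ ·) C → ∀ x, IsLUB C x → IsLUB (f '' C) (f x)

theorem ChainContinuous.monotone {f : α → β} (hf : ChainContinuous f) : Monotone f := by
  intro a b hab
  have hchain : IsChain (· ≤ ·) ({a, b} : Set α) := by
    rintro p (rfl | rfl) q (rfl | rfl) - <;> simp [hab]
  have hlub : IsLUB ({a, b} : Set α) b :=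
    ⟨by rintro p (rfl | rfl) <;> simp [hab], fun v hv => hv (by simp)⟩
  exact (hf _ (by simp) hchain b hlub).1 ⟨a, by simp, rfl⟩

theorem ChainContinuous.comp {g : β → γ} {f : α → β} (hg : ChainContinuous g)
    (hf : ChainContinuous f) : ChainContinuous (g ∘ f) := by
  intro C hne hchain x hx
  rw [Set.image_comp]
  exact hg _ (hne.image f) (hf.monotone.isChain_image hchain) _ (hf C hne hchain x hx)

end ChainContinuous

namespace IterClosure

variable {X : Type*} {F : Set (X → X)} {φ : X → X}

theorem induction_comp {P : (X → X) → Prop} (hP : ∀ f ∈ F, P f)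
    (hcomp : ∀ f ψ, P f → P ψ → P (f ∘ ψ)) (hφ : IterClosure F φ) : P φ := by
  induction hφ with
  | base hf => exact hP _ hf
  | comp hf _ ih => exact hcomp _ _ (hP _ hf) ih

theorem comp_right {f : X → X} (hφ : IterClosure F φ) (hf : f ∈ F) : IterClosure F (φ ∘ f) := by
  induction hφ with
  | base hg => exact .comp hg (.base hf)
  | comp hg _ ih => exact .comp (φ := _ ∘ f) hg ih

theorem chainContinuous [Preorder X] (hcont : ∀ f ∈ F, ChainContinuous f)
    (hφ : IterClosure F φ) : ChainContinuous φ :=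
  hφ.induction_comp hcont fun _ _ => ChainContinuous.comp

theorem apply_eq_self {u : X} (hfix : ∀ f ∈ F, f u = u) (hφ : IterClosure F φ) : φ u = u :=
  hφ.induction_comp hfix fun f ψ hf hψ => by rw [Function.comp_apply, hψ, hf]

end IterClosure

section CommonFixedPoint

variable {X : Type*} [PartialOrder X] {F : Set (X → X)}

def boundedPostfixedPoints (F : Set (X → X)) (u : X) : Set X :=
  {y | (∀ f ∈ F, y ≤ f y) ∧ ∀ φ, IterClosure F φ → φ y ≤ u}

theorem apply_mem_boundedPostfixedPoints (hcont : ∀ f ∈ F, ChainContinuous f)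
    (hcomm : ∀ f ∈ F, ∀ g ∈ F, f ∘ g = g ∘ f) {u y : X} (hy : y ∈ boundedPostfixedPoints F u)
    {f : X → X} (hf : f ∈ F) : f y ∈ boundedPostfixedPoints F u := by
  refine ⟨fun g hg => ?_, fun φ hφ => hy.2 _ (hφ.comp_right hf)⟩
  rw [← Function.comp_apply (f := g), hcomm g hg f hf, Function.comp_apply]
  exact (hcont f hf).monotone (hy.1 g hg)

theorem isLUB_mem_boundedPostfixedPoints (hcont : ∀ f ∈ F, ChainContinuous f) {u s : X}
    {C : Set X} (hCZ : C ⊆ boundedPostfixedPoints F u) (hne : C.Nonempty)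
    (hchain : IsChain (· ≤ ·) C) (hs : IsLUB C s) : s ∈ boundedPostfixedPoints F u := by
  refine ⟨fun f hf => hs.2 fun c hc => ?_, fun φ hφ => ?_⟩
  · exact ((hCZ hc).1 f hf).trans ((hcont f hf C hne hchain s hs).1 ⟨c, hc, rfl⟩)
  · refine ((hφ.chainContinuous hcont) C hne hchain s hs).2 ?_
    rintro _ ⟨c, hc, rfl⟩
    exact (hCZ hc).2 φ hφ

theorem exists_common_fixedPt_between
    (hcc : ∀ C : Set X, IsChain (· ≤ ·) C → ∃ s, IsLUB C s) (hF : F.Nonempty)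
    (hcont : ∀ f ∈ F, ChainContinuous f) (hcomm : ∀ f ∈ F, ∀ g ∈ F, f ∘ g = g ∘ f)
    {x u : X} (hx : x ∈ boundedPostfixedPoints F u) :
    ∃ m, x ≤ m ∧ m ≤ u ∧ ∀ f ∈ F, f m = m := by
  obtain ⟨m, hxm, hm⟩ := zorn_le_nonempty₀ (boundedPostfixedPoints F u)
    (fun C hCZ hchain c hc => by
      obtain ⟨s, hs⟩ := hcc C hchain
      exact ⟨s, isLUB_mem_boundedPostfixedPoints hcont hCZ ⟨c, hc⟩ hchain hs, hs.1⟩) x hx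
  have hfix : ∀ f ∈ F, f m = m := fun f hf =>
    (hm.2 (apply_mem_boundedPostfixedPoints hcont hcomm hm.1 hf) (hm.1.1 f hf)).antisymm
      (hm.1.1 f hf)
  obtain ⟨f, hf⟩ := hF
  exact ⟨m, hxm, hfix f hf ▸ hm.1.2 f (.base hf), hfix⟩

end CommonFixedPoint

/-- In a chain-complete poset, for a nonempty commutative family `F` of
chain-continuous self-maps, `u` is a common fixed point of `F` iff `u` is a least upper
bound of the orbit `{φ x : φ ∈ iter F}` of some point `x` with `x ≤ f x` for all `f ∈ F`. -/
theorem stmt_2 {X : Type*} [PartialOrder X]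
    (hcc : ∀ C : Set X, IsChain (· ≤ ·) C → ∃ s, IsLUB C s)
    (F : Set (X → X)) (hF : F.Nonempty)
    (hcont : ∀ f ∈ F, ∀ C : Set X, C.Nonempty → IsChain (· ≤ ·) C →
      ∀ x, IsLUB C x → IsLUB (f '' C) (f x))
    (hcomm : ∀ f ∈ F, ∀ g ∈ F, f ∘ g = g ∘ f)
    (u : X) :
    (∀ f ∈ F, f u = u) ↔
      ∃ x : X, (∀ f ∈ F, x ≤ f x) ∧
        IsLUB {y : X | ∃ φ : X → X, IterClosure F φ ∧ y = φ x} u := by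
  constructor
  · intro hfix
    obtain ⟨f, hf⟩ := hF
    refine ⟨u, fun f hf => (hfix f hf).ge, ?_, fun b hb => hb ⟨f, .base hf, (hfix f hf).symm⟩⟩
    rintro _ ⟨φ, hφ, rfl⟩
    exact (hφ.apply_eq_self hfix).le
  · rintro ⟨x, hx, hu⟩
    obtain ⟨m, hxm, hmu, hfix⟩ :=
      exists_common_fixedPt_between hcc hF hcont hcomm ⟨hx, fun φ hφ => hu.1 ⟨φ, hφ, rfl⟩⟩
    have hum : u ≤ m := hu.2 <| by
      rintro _ ⟨φ, hφ, rfl⟩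
      exact (hφ.chainContinuous hcont).monotone hxm |>.trans_eq (hφ.apply_eq_self hfix)
    exact le_antisymm hmu hum ▸ hfix
end

section
/- Let (X, ≤) be a chain-complete partially ordered set and let f : X → X be monotone. Then the set fix f = {x ∈ X : f x = x}, equipped with the induced order, is chain-complete: every subset C of fix f that is totally ordered by ≤ (including the empty set) has a least upper bound within fix f. In particular fix f is nonempty and has a least element. -/
/-- Key lemma: for any chain `C` of fixed points, there is a least fixed point
among the upper bounds of `C`. -/
theorem aux_least_fixed {X : Type*} [PartialOrder X]
    (hcc : ∀ C : Set X, IsChain (· ≤ ·) C → ∃ s, IsLUB C s)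
    (f : X → X) (hmono : Monotone f)
    (C : Set X) (hC : C ⊆ {x : X | f x = x}) (hchain : IsChain (· ≤ ·) C) :
    ∃ u, f u = u ∧ (∀ c ∈ C, c ≤ u) ∧
      ∀ v, f v = v → (∀ c ∈ C, c ≤ v) → u ≤ v := by
  obtain ⟨s, hs⟩ := hcc C hchain
  -- B : upper bounds of C that are pre-fixed, ≥ s, and below every fixed upper bound
  set B : Set X := {x | s ≤ x ∧ (∀ c ∈ C, c ≤ x) ∧ x ≤ f x ∧
      ∀ v, f v = v → (∀ c ∈ C, c ≤ v) → x ≤ v} with hB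
  have hsleFs : s ≤ f s := by
    apply hs.2
    intro c hc
    have : c ≤ s := hs.1 hc
    calc c = f c := (hC hc).symm
    _ ≤ f s := hmono this
  have hsB : s ∈ B := by
    refine ⟨le_rfl, fun c hc => hs.1 hc, hsleFs, ?_⟩
    intro v _ hv
    exact hs.2 hv
  have hfB : ∀ x ∈ B, f x ∈ B := by
    rintro x ⟨hsx, hub, hxfx, hmin⟩
    refine ⟨le_trans hsx hxfx, ?_, hmono hxfx, ?_⟩
    · intro c hc
      calc c = f c := (hC hc).symm
      _ ≤ f x := hmono (hub c hc)
    · intro v hfv hv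
      calc f x ≤ f v := hmono (hmin v hfv hv)
      _ = v := hfv
  -- every chain in B has an upper bound in B
  have hzorn : ∀ c ⊆ B, IsChain (· ≤ ·) c → ∃ ub ∈ B, ∀ z ∈ c, z ≤ ub := by
    intro D hD hDchain
    obtain ⟨t, ht⟩ := hcc (insert s D) (hDchain.insert (fun y hy _ => Or.inl (hD hy).1))
    have hst : s ≤ t := ht.1 (Set.mem_insert _ _)
    refine ⟨t, ⟨hst, ?_, ?_, ?_⟩, fun z hz => ht.1 (Set.mem_insert_of_mem _ hz)⟩
    · intro c hc
      exact le_trans (hs.1 hc) hst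
    · apply ht.2
      rintro y (rfl | hy)
      · exact le_trans hsleFs (hmono hst)
      · exact le_trans (hD hy).2.2.1 (hmono (ht.1 (Set.mem_insert_of_mem _ hy)))
    · intro v hfv hv
      apply ht.2
      rintro y (rfl | hy)
      · exact hs.2 hv
      · exact (hD hy).2.2.2 v hfv hv
  obtain ⟨m, hm⟩ := zorn_le₀ B hzorn
  have hmB : m ∈ B := hm.1
  have hfix : f m = m := le_antisymm (hm.2 (hfB m hmB) hmB.2.2.1) hmB.2.2.1
  exact ⟨m, hfix, hmB.2.1, hmB.2.2.2⟩

/-- For a chain-complete poset `X` and a monotone `f : X → X`, the set of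
fixed points of `f` is chain-complete in the induced order; in particular it is nonempty
and has a least element. -/
theorem stmt_5 {X : Type*} [PartialOrder X]
    (hcc : ∀ C : Set X, IsChain (· ≤ ·) C → ∃ s, IsLUB C s)
    (f : X → X) (hmono : Monotone f) :
    (∀ C ⊆ {x : X | f x = x}, IsChain (· ≤ ·) C →
      ∃ u ∈ {x : X | f x = x},
        (∀ c ∈ C, c ≤ u) ∧
        ∀ v ∈ {x : X | f x = x}, (∀ c ∈ C, c ≤ v) → u ≤ v) ∧
    ({x : X | f x = x}).Nonempty ∧
    (∃ b ∈ {x : X | f x = x}, ∀ x ∈ {x : X | f x = x}, b ≤ x) := by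
  obtain ⟨b, hb, -, hbmin⟩ := aux_least_fixed hcc f hmono ∅ (by simp) (by simp)
  refine ⟨?_, ⟨b, hb⟩, ⟨b, hb, fun x hx => hbmin x hx (by simp)⟩⟩
  intro C hC hchain
  obtain ⟨u, hu, hub, hmin⟩ := aux_least_fixed hcc f hmono C hC hchain
  exact ⟨u, hu, hub, fun v hv hvub => hmin v hv hvub⟩
end

section
/- Let (X, ≤) be a partially ordered set and let F be a nonempty commutative family of monotone maps from X to itself. Then for every x ∈ X with x ≤ f x for all f ∈ F, the orbit set {φ x : φ ∈ iter F} is directed with respect to ≤: any two of its elements have a common upper bound in the set. -/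
/-! Given `φ, ψ ∈ iter F`, the composite `φ ∘ ψ = ψ ∘ φ` lies in `iter F` and dominates both
`φ x` and `ψ x`: apply the monotone maps `φ` and `ψ` to the inequalities `x ≤ ψ x` and
`x ≤ φ x`. -/

namespace IterClosure

variable {X : Type*} {F : Set (X → X)} {φ ψ : X → X}

theorem comp_iterClosure (hφ : IterClosure F φ) (hψ : IterClosure F ψ) :
    IterClosure F (φ ∘ ψ) := by
  induction hφ with
  | base hf => exact .comp hf hψ
  | comp hf _ ih => rw [Function.comp_assoc]; exact .comp hf ih

theorem commute_of_forall_commute {g : X → X} (hg : ∀ f ∈ F, Function.Commute f g)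
    (hφ : IterClosure F φ) : Function.Commute φ g := by
  induction hφ with
  | base hf => exact hg _ hf
  | comp hf _ ih => exact (hg _ hf).comp_left ih

theorem commute (hcomm : ∀ f ∈ F, ∀ g ∈ F, f ∘ g = g ∘ f)
    (hφ : IterClosure F φ) (hψ : IterClosure F ψ) : Function.Commute φ ψ :=
  hφ.commute_of_forall_commute fun f hf ↦
    (hψ.commute_of_forall_commute fun g hg ↦ congrFun (hcomm g hg f hf)).symm

section Preorder

variable [Preorder X]

theorem monotone (hmono : ∀ f ∈ F, Monotone f) (hφ : IterClosure F φ) : Monotone φ := by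
  induction hφ with
  | base hf => exact hmono _ hf
  | comp hf _ ih => exact (hmono _ hf).comp ih

theorem le_apply (hmono : ∀ f ∈ F, Monotone f) {x : X} (hx : ∀ f ∈ F, x ≤ f x)
    (hφ : IterClosure F φ) : x ≤ φ x := by
  induction hφ with
  | base hf => exact hx _ hf
  | comp hf _ ih => exact (hx _ hf).trans (hmono _ hf ih)

end Preorder

end IterClosure

theorem stmt_7_general {X : Type*} [PartialOrder X]
    (F : Set (X → X))
    (hmono : ∀ f ∈ F, Monotone f)
    (hcomm : ∀ f ∈ F, ∀ g ∈ F, f ∘ g = g ∘ f) :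
    ∀ x : X, (∀ f ∈ F, x ≤ f x) →
      DirectedOn (· ≤ ·) {y : X | ∃ φ : X → X, IterClosure F φ ∧ y = φ x} := by
  rintro x hx _ ⟨φ, hφ, rfl⟩ _ ⟨ψ, hψ, rfl⟩
  refine ⟨φ (ψ x), ⟨φ ∘ ψ, hφ.comp_iterClosure hψ, rfl⟩, ?_, ?_⟩
  · exact hφ.monotone hmono (hψ.le_apply hmono hx)
  · rw [hφ.commute hcomm hψ x]
    exact hψ.monotone hmono (hφ.le_apply hmono hx)

/-- For a poset `X` and a nonempty commutative family `F` of monotone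
self-maps, the orbit `{φ x : φ ∈ iter F}` of any point `x` of the extensivity domain
is directed. -/
theorem stmt_7 {X : Type*} [PartialOrder X]
    (F : Set (X → X)) (hF : F.Nonempty)
    (hmono : ∀ f ∈ F, Monotone f)
    (hcomm : ∀ f ∈ F, ∀ g ∈ F, f ∘ g = g ∘ f) :
    ∀ x : X, (∀ f ∈ F, x ≤ f x) →
      DirectedOn (· ≤ ·) {y : X | ∃ φ : X → X, IterClosure F φ ∧ y = φ x} :=
  stmt_7_general F hmono hcomm
end

section
/- Let (X, ≤) be a chain-complete partially ordered set and let F be a nonempty commutative family of chain-continuous maps from X to itself. Suppose x ∈ X satisfies x ≤ f x for every f ∈ F, and suppose u is a least upper bound of the orbit set {φ x : φ ∈ iter F}. Then u is a common fixed point of F: g u = u for every g ∈ F. -/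
/-- In a chain-complete poset, for a nonempty commutative family `F` of
chain-continuous self-maps, if `x ≤ f x` for all `f ∈ F` and `u` is a least upper bound
of the orbit `{φ x : φ ∈ iter F}`, then `u` is a common fixed point of `F`. -/
theorem stmt_8 {X : Type*} [PartialOrder X]
    (hcc : ∀ C : Set X, IsChain (· ≤ ·) C → ∃ s, IsLUB C s)
    (F : Set (X → X)) (hF : F.Nonempty)
    (hcont : ∀ f ∈ F, ∀ C : Set X, C.Nonempty → IsChain (· ≤ ·) C →
      ∀ x, IsLUB C x → IsLUB (f '' C) (f x))
    (hcomm : ∀ f ∈ F, ∀ g ∈ F, f ∘ g = g ∘ f)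
    (x : X) (hx : ∀ f ∈ F, x ≤ f x)
    (u : X) (hu : IsLUB {y : X | ∃ φ : X → X, IterClosure F φ ∧ y = φ x} u) :
    ∀ g ∈ F, g u = u := by
  set D : Set X := {y : X | ∃ φ : X → X, IterClosure F φ ∧ y = φ x} with hD
  -- each chain-continuous map is monotone
  have mono : ∀ f ∈ F, Monotone f := by
    intro f hf a b hab
    have hchain : IsChain (· ≤ ·) ({a, b} : Set X) := by
      intro p hp q hq _
      rcases hp with rfl | rfl <;> rcases hq with rfl | rfl <;> simp [hab]
    have hlub : IsLUB ({a, b} : Set X) b := by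
      constructor
      · intro p hp; rcases hp with rfl | rfl <;> simp [hab]
      · intro w hw; exact hw (by simp)
    have := hcont f hf {a, b} ⟨a, by simp⟩ hchain b hlub
    exact this.1 ⟨a, by simp⟩
  -- composition closure maps: chain-continuous
  have contIter : ∀ φ, IterClosure F φ → ∀ C : Set X, C.Nonempty → IsChain (· ≤ ·) C →
      ∀ s, IsLUB C s → IsLUB (φ '' C) (φ s) := by
    intro φ hφ
    induction hφ with
    | base hf => exact hcont _ hf
    | comp hf hψ ih =>
      intro C hCne hCch s hs
      rename_i f ψ
      have h1 := ih C hCne hCch s hs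
      have hmonoψ : Monotone ψ := by
        intro a b hab
        have hch : IsChain (· ≤ ·) ({a, b} : Set X) := by
          intro p hp q hq _
          rcases hp with rfl | rfl <;> rcases hq with rfl | rfl <;> simp [hab]
        have hlub : IsLUB ({a, b} : Set X) b := by
          constructor
          · intro p hp; rcases hp with rfl | rfl <;> simp [hab]
          · intro w hw; exact hw (by simp)
        have := ih {a, b} ⟨a, by simp⟩ hch b hlub
        exact this.1 ⟨a, by simp⟩
      have hch2 : IsChain (· ≤ ·) (ψ '' C) := by
        rintro _ ⟨p, hp, rfl⟩ _ ⟨q, hq, rfl⟩ _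
        rcases eq_or_ne p q with rfl | hpq
        · left; rfl
        · rcases hCch hp hq hpq with h | h
          · left; exact hmonoψ h
          · right; exact hmonoψ h
      have h2 := hcont f hf (ψ '' C) (hCne.image ψ) hch2 (ψ s) h1
      rwa [← Set.image_comp] at h2
  have monoIter : ∀ φ, IterClosure F φ → Monotone φ := by
    intro φ hφ a b hab
    have hch : IsChain (· ≤ ·) ({a, b} : Set X) := by
      intro p hp q hq _
      rcases hp with rfl | rfl <;> rcases hq with rfl | rfl <;> simp [hab]
    have hlub : IsLUB ({a, b} : Set X) b := by
      constructor
      · intro p hp; rcases hp with rfl | rfl <;> simp [hab]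
      · intro w hw; exact hw (by simp)
    have := contIter φ hφ {a, b} ⟨a, by simp⟩ hch b hlub
    exact this.1 ⟨a, by simp⟩
  -- closure is closed under right composition with members of F
  have rightComp : ∀ φ, IterClosure F φ → ∀ f ∈ F, IterClosure F (φ ∘ f) := by
    intro φ hφ
    induction hφ with
    | base hg => intro f hf; exact .comp ‹_› (.base hf)
    | comp hg hψ ih =>
      intro f hf
      rename_i g ψ
      show IterClosure F (g ∘ (ψ ∘ f))
      exact .comp hg (ih f hf)
  -- the auxiliary set A
  set A : Set X := {y : X | x ≤ y ∧ (∀ f ∈ F, y ≤ f y) ∧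
      (∀ φ, IterClosure F φ → φ y ≤ u)} with hA
  have hAle : ∀ y ∈ A, y ≤ u := by
    rintro y ⟨_, h2, h3⟩
    obtain ⟨f, hf⟩ := hF
    exact (h2 f hf).trans (h3 f (.base hf))
  have hxA : x ∈ A := by
    refine ⟨le_rfl, hx, fun φ hφ => hu.1 ⟨φ, hφ, rfl⟩⟩
  -- A is closed under each f ∈ F
  have hAf : ∀ f ∈ F, ∀ y ∈ A, f y ∈ A := by
    rintro f hf y ⟨h1, h2, h3⟩
    refine ⟨h1.trans (h2 f hf), ?_, ?_⟩
    · intro f' hf'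
      have : f' (f y) = f (f' y) := by
        have := hcomm f' hf' f hf
        exact congrFun this y
      rw [this]
      exact mono f hf (h2 f' hf')
    · intro φ hφ
      exact h3 (φ ∘ f) (rightComp φ hφ f hf)
  -- every nonempty chain in A has a lub in A
  have hAchain : ∀ C ⊆ A, IsChain (· ≤ ·) C → C.Nonempty → ∃ s ∈ A, ∀ z ∈ C, z ≤ s := by
    intro C hCA hCch hCne
    obtain ⟨s, hs⟩ := hcc C hCch
    refine ⟨s, ⟨?_, ?_, ?_⟩, fun z hz => hs.1 hz⟩
    · obtain ⟨y, hy⟩ := hCne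
      exact (hCA hy).1.trans (hs.1 hy)
    · intro f hf
      have hflub := hcont f hf C hCne hCch s hs
      refine hs.2 ?_
      intro c hc
      exact ((hCA hc).2.1 f hf).trans (hflub.1 ⟨c, hc, rfl⟩)
    · intro φ hφ
      have hφlub := contIter φ hφ C hCne hCch s hs
      refine hφlub.2 ?_
      rintro _ ⟨c, hc, rfl⟩
      exact (hCA hc).2.2 φ hφ
  -- Zorn: a maximal element of A
  obtain ⟨m, hxm, hmA, hmax⟩ := zorn_le_nonempty₀ A
    (fun c hcA hc y hy => hAchain c hcA hc ⟨y, hy⟩) x hxA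
  -- m is a common fixed point of F
  have hmfix : ∀ f ∈ F, f m = m := by
    intro f hf
    have h1 : f m ∈ A := hAf f hf m hmA
    have h2 : m ≤ f m := hmA.2.1 f hf
    exact le_antisymm (hmax h1 h2) h2
  have hmfixIter : ∀ φ, IterClosure F φ → φ m = m := by
    intro φ hφ
    induction hφ with
    | base hg => exact hmfix _ hg
    | comp hg hψ ih =>
      rename_i f ψ
      show f (ψ m) = m
      rw [ih, hmfix _ hg]
  -- m is an upper bound of D, so u ≤ m; also m ≤ u, hence m = u
  have hmub : m ∈ upperBounds D := by
    rintro _ ⟨φ, hφ, rfl⟩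
    calc φ x ≤ φ m := monoIter φ hφ hxm
    _ = m := hmfixIter φ hφ
  have hum : u = m := le_antisymm (hu.2 hmub) (hAle m hmA)
  intro g hg
  rw [hum]
  exact hmfix g hg
end

section
/- Let (X, ≤) be a chain-complete partially ordered set. Then X is directed-complete: every subset D ⊆ X that is directed with respect to ≤ (any two elements of D have a common upper bound in D) has a least upper bound in X. -/
/-!
Iwamura's argument, by induction on the cardinality of the directed set `D`. A countable directed
set has a cofinal increasing sequence, whose supremum is that of `D`. An uncountable `D` is the
union of a chain, under inclusion, of directed subsets of smaller cardinality: enumerate `D` along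
the initial well-order of its cardinality and close each initial segment under a fixed choice of
upper bounds. The suprema of these pieces form a chain, and its supremum is that of `D`.
-/

open Set Cardinal

theorem Cardinal.mk_iUnion_nat_le {α : Type*} {f : ℕ → Set α} {c : Cardinal} (hc : ℵ₀ ≤ c)
    (hf : ∀ n, #(f n) ≤ c) : #(⋃ n, f n) ≤ c := by
  have h := mk_iUnion_le_lift.{_, 0} f
  rw [lift_uzero, mk_nat, lift_aleph0] at h
  calc #(⋃ n, f n) ≤ ℵ₀ * ⨆ n, lift.{0} #(f n) := h
    _ ≤ c * c := by
        gcongr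
        exact ciSup_le' fun n => by simpa using hf n
    _ = c := mul_eq_self hc

section BinaryClosure

variable {α : Type*} (u : α → α → α)

def binaryClosure (S : Set α) : Set α :=
  ⋃ n : ℕ, (fun T => T ∪ image2 u T T)^[n] S

variable {u} {S T D : Set α}

theorem subset_binaryClosure : S ⊆ binaryClosure u S :=
  subset_iUnion_of_subset 0 subset_rfl

theorem binaryClosure_mono (h : S ⊆ T) : binaryClosure u S ⊆ binaryClosure u T := by
  have hstep : Monotone fun T : Set α => T ∪ image2 u T T :=
    fun _ _ h => union_subset_union h (image2_subset h h)
  exact iUnion_mono fun n => hstep.iterate n h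

theorem map_mem_binaryClosure {a b : α} (ha : a ∈ binaryClosure u S)
    (hb : b ∈ binaryClosure u S) : u a b ∈ binaryClosure u S := by
  obtain ⟨m, ha⟩ := mem_iUnion.1 ha
  obtain ⟨n, hb⟩ := mem_iUnion.1 hb
  have hiter := Function.monotone_iterate_of_id_le (f := fun T : Set α => T ∪ image2 u T T)
    fun _ => subset_union_left
  refine mem_iUnion.2 ⟨max m n + 1, ?_⟩
  rw [Function.iterate_succ_apply']
  exact Or.inr (mem_image2_of_mem (hiter (le_max_left m n) S ha) (hiter (le_max_right m n) S hb))

theorem binaryClosure_subset (hD : ∀ a ∈ D, ∀ b ∈ D, u a b ∈ D) (hS : S ⊆ D) :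
    binaryClosure u S ⊆ D := by
  refine iUnion_subset fun n => ?_
  induction n with
  | zero => exact hS
  | succ n ih =>
    rw [Function.iterate_succ_apply']
    exact union_subset ih (image2_subset_iff.2 fun a ha b hb => hD a (ih ha) b (ih hb))

theorem mk_binaryClosure_le : #(binaryClosure u S) ≤ max #S ℵ₀ := by
  refine mk_iUnion_nat_le (le_max_right _ _) fun n => ?_
  induction n with
  | zero => exact le_max_left _ _
  | succ n ih =>
    rw [Function.iterate_succ_apply']
    calc _ ≤ max #S ℵ₀ + max #S ℵ₀ * max #S ℵ₀ :=
          (mk_union_le _ _).trans (add_le_add ih (mk_image2_le.trans (mul_le_mul' ih ih)))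
      _ = max #S ℵ₀ := by rw [mul_eq_self (le_max_right _ _), add_eq_self (le_max_right _ _)]

end BinaryClosure

section ChainComplete

variable {X : Type*} [Preorder X]

theorem directedOn_binaryClosure {u : X → X → X} {S D : Set X}
    (hu : ∀ a ∈ D, ∀ b ∈ D, u a b ∈ D ∧ a ≤ u a b ∧ b ≤ u a b) (hS : S ⊆ D) :
    DirectedOn (· ≤ ·) (binaryClosure u S) := by
  have hsub := binaryClosure_subset (fun a ha b hb => (hu a ha b hb).1) hS
  intro a ha b hb
  obtain ⟨-, hau, hbu⟩ := hu a (hsub ha) b (hsub hb)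
  exact ⟨u a b, map_mem_binaryClosure ha hb, hau, hbu⟩

/-- **Iwamura's lemma**. -/
theorem DirectedOn.exists_isChain_sUnion_eq {D : Set X} (hD : DirectedOn (· ≤ ·) D)
    (hℵ : ℵ₀ < #D) : ∃ 𝒮 : Set (Set X), IsChain (· ⊆ ·) 𝒮 ∧ ⋃₀ 𝒮 = D ∧
      ∀ S ∈ 𝒮, DirectedOn (· ≤ ·) S ∧ #S < #D := by
  have : Nonempty X := (mk_ne_zero_iff.1 (aleph0_pos.trans hℵ).ne').map Subtype.val
  choose! u hu using hD
  obtain ⟨e⟩ : Nonempty ((#D).ord.ToType ≃ D) := Cardinal.eq.1 (mk_ord_toType _)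
  let P i := binaryClosure u (Subtype.val ∘ e '' Iic i)
  have hmono : Monotone P := fun i j hij => binaryClosure_mono (image_mono (Iic_subset_Iic.2 hij))
  have hsegD i : Subtype.val ∘ e '' Iic i ⊆ D := by
    rintro _ ⟨j, -, rfl⟩
    exact (e j).2
  refine ⟨range P, hmono.isChain_range, ?_, forall_mem_range.2 fun i => ⟨?_, ?_⟩⟩
  · refine (sUnion_subset (forall_mem_range.2 fun i =>
      binaryClosure_subset (fun a ha b hb => (hu a ha b hb).1) (hsegD i))).antisymm fun d hd => ?_
    exact mem_sUnion_of_mem (t := P (e.symm ⟨d, hd⟩))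
      (subset_binaryClosure ⟨_, self_mem_Iic, by simp⟩) (mem_range_self _)
  · exact directedOn_binaryClosure hu (hsegD i)
  · have hseg : #(Subtype.val ∘ e '' Iic i) < #D :=
      calc #(Subtype.val ∘ e '' Iic i) ≤ #(Iic i) := mk_image_le
        _ ≤ #(Iio i) + 1 := by rw [← Iio_insert]; exact mk_insert_le
        _ < #D := add_lt_of_lt hℵ.le (by simpa using mk_Iio_lt i (by simp))
            (one_lt_aleph0.trans hℵ)
    exact mk_binaryClosure_le.trans_lt (max_lt hseg hℵ)

theorem exists_isLUB_sUnion_of_isChain (hcc : ∀ C : Set X, IsChain (· ≤ ·) C → ∃ s, IsLUB C s)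
    {𝒮 : Set (Set X)} (h𝒮 : IsChain (· ⊆ ·) 𝒮) (hlub : ∀ S ∈ 𝒮, ∃ s, IsLUB S s) :
    ∃ s, IsLUB (⋃₀ 𝒮) s := by
  have hchain : IsChain (· ≤ ·) {s | ∃ S ∈ 𝒮, IsLUB S s} := by
    rintro a ⟨S, hS, ha⟩ b ⟨T, hT, hb⟩ -
    exact (h𝒮.total hS hT).imp (ha.mono hb) (hb.mono ha)
  obtain ⟨s, hs⟩ := hcc _ hchain
  refine ⟨s, ?_, fun b hb => hs.2 ?_⟩
  · rintro x ⟨S, hS, hx⟩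
    obtain ⟨t, ht⟩ := hlub S hS
    exact (ht.1 hx).trans (hs.1 ⟨S, hS, ht⟩)
  · rintro t ⟨S, hS, ht⟩
    exact ht.2 (upperBounds_mono_set (subset_sUnion_of_mem hS) hb)

theorem exists_isLUB_of_countable (hcc : ∀ C : Set X, IsChain (· ≤ ·) C → ∃ s, IsLUB C s)
    {D : Set X} (hD : DirectedOn (· ≤ ·) D) (hc : D.Countable) : ∃ s, IsLUB D s := by
  rcases D.eq_empty_or_nonempty with rfl | ⟨d, hd⟩
  · exact hcc ∅ IsChain.empty
  have : Encodable D := hc.toEncodable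
  have : Inhabited D := ⟨⟨d, hd⟩⟩
  have hdir := hD.directed_val
  obtain ⟨s, hs⟩ := hcc _ hdir.sequence_mono.isChain_range
  have hcof : IsCofinalFor D (range (Subtype.val ∘ hdir.sequence Subtype.val)) :=
    fun x hx => ⟨_, mem_range_self _, hdir.le_sequence ⟨x, hx⟩⟩
  refine ⟨s, upperBounds_mono_of_isCofinalFor hcof hs.1, fun b hb => hs.2 ?_⟩
  rintro _ ⟨n, rfl⟩
  exact hb (hdir.sequence Subtype.val n).2

end ChainComplete

/-- A chain-complete poset is directed-complete: every directed subset has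
a least upper bound. -/
theorem stmt_9 {X : Type*} [PartialOrder X]
    (hcc : ∀ C : Set X, IsChain (· ≤ ·) C → ∃ s, IsLUB C s) :
    ∀ D : Set X, DirectedOn (· ≤ ·) D → ∃ s, IsLUB D s := by
  intro D hD
  induction hκ : #D using WellFoundedLT.induction generalizing D with
  | ind κ IH =>
  rcases le_or_gt #D ℵ₀ with hc | hℵ
  · exact exists_isLUB_of_countable hcc hD (countable_coe_iff.1 (mk_le_aleph0_iff.1 hc))
  obtain ⟨𝒮, h𝒮, rfl, hpieces⟩ := hD.exists_isChain_sUnion_eq hℵ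
  exact exists_isLUB_sUnion_of_isChain hcc h𝒮 fun S hS =>
    IH _ (hκ ▸ (hpieces S hS).2) S (hpieces S hS).1 rfl
end
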